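/- For every c > 0, the map F_c is monotone with respect to the stochastic order: if μ₁ ⪯ μ₂ then F_c(μ₁) ⪯ F_c(μ₂). -/

import Mathlib

open Filter Topology Set

noncomputable section

/-- Convolution of two (sub)probability mass functions on `ℕ∞ = ℕ⁺ ∪ {∞} ∪ {0}`,
with the convention `∞ + anything = ∞`. -/
def conv (μ ν : ℕ∞ → ℝ) : ℕ∞ → ℝ :=
  fun k => ∑' p : ℕ∞ × ℕ∞, if p.1 + p.2 = k then μ p.1 * ν p.2 else 0

/-- The factor `(l(l-1)/2) / (l(l-1)/2 + c)`, the probability that the coalescence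
from `l` to `l-1` lineages happens before an independent `Exp(c)` time. -/
def kingmanFactor (c : ℝ) (l : ℕ) : ℝ :=
  ((l : ℝ) * ((l : ℝ) - 1) / 2) / ((l : ℝ) * ((l : ℝ) - 1) / 2 + c)

/-- `pK c j i` : the probability that Kingman's coalescent started from `j` lineages
has exactly `i` lineages at an independent exponential time with rate `c`. -/
def pK (c : ℝ) (j : ℕ∞) (i : ℕ) : ℝ :=
  (c / ((i : ℝ) * ((i : ℝ) - 1) / 2 + c)) *
    (if j = ⊤ then ∏' l : ℕ, kingmanFactor c (i + 1 + l)
     else ∏ l ∈ Finset.Icc (i + 1) j.toNat, kingmanFactor c l)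

/-- The mass that `F_c μ` puts on a finite `k ∈ ℕ⁺`. -/
def FcFin (c : ℝ) (μ : ℕ∞ → ℝ) (k : ℕ) : ℝ :=
  ∑' j : ℕ∞, if (k : ℕ∞) ≤ j then conv μ μ j * pK c j k else 0

/-- The map `F_c` on distributions on `ℕ⁺ ∪ {∞}`; the mass at `∞` is the remaining mass. -/
def Fc (c : ℝ) (μ : ℕ∞ → ℝ) : ℕ∞ → ℝ :=
  fun k =>
    if k = ⊤ then 1 - ∑' n : ℕ, FcFin c μ n
    else if k = 0 then 0 else FcFin c μ k.toNat

/-- `μ` is a probability distribution on `ℕ⁺ ∪ {∞}` (no mass at `0`). -/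
def IsDist (μ : ℕ∞ → ℝ) : Prop :=
  (∀ k, 0 ≤ μ k) ∧ μ 0 = 0 ∧ HasSum μ 1

/-- The mean of a distribution on `ℕ⁺ ∪ {∞}` (ignoring the mass at `∞`). -/
def distMean (μ : ℕ∞ → ℝ) : ℝ := ∑' n : ℕ, (n : ℝ) * μ (n : ℕ∞)

/-- `μ` belongs to `S₁`: a probability distribution on `ℕ⁺` with finite mean. -/
def MemS1 (μ : ℕ∞ → ℝ) : Prop :=
  IsDist μ ∧ μ ⊤ = 0 ∧ Summable (fun n : ℕ => (n : ℝ) * μ (n : ℕ∞))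

/-- `StDom μ ν` : `μ ⪯ ν` in the usual stochastic order, i.e.
`μ([0,x]) ≥ ν([0,x])` for all `x ∈ [0,∞]`. -/
def StDom (μ ν : ℕ∞ → ℝ) : Prop :=
  ∀ x : ℕ∞, (∑' k : ℕ∞, if k ≤ x then ν k else 0) ≤ ∑' k : ℕ∞, if k ≤ x then μ k else 0

/-- The unit point mass at `a`. -/
def delta (a : ℕ∞) : ℕ∞ → ℝ := fun k => if k = a then 1 else 0

end


/-!
Write `μ ⪯ ν` as `ν(D) ≤ μ(D)` for every lower set `D`. In this form the order is preserved by
products, since the sections of a lower set of a product are lower sets (Fubini), hence by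
convolution, since the preimage of a lower set under addition is a lower set. It also yields
`∑ ν f ≤ ∑ μ f` for antitone `f` with values in `[0, 1]`, by slicing `f` into its superlevel
sets, which are lower sets. The distribution function of `F_c(μ)` at `m` is `∑ⱼ (μ ∗ μ)(j) g(j)`, where
`g(j)` is the probability that the coalescent started from `j` lineages is down to at most `m`
lineages at the exponential time, and `g` is antitone because `p_c(j + 1, k) ≤ p_c(j, k)` for
`k ≤ j`.
-/

section StochasticOrder

variable {α β : Type*}

def LowerSetStDom [Preorder α] (μ ν : α → ℝ) : Prop :=
  ∀ D : Set α, IsLowerSet D → ∑' k, D.indicator ν k ≤ ∑' k, D.indicator μ k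

theorem lowerSetStDom_of_cdf_le [LinearOrder α] {μ ν : α → ℝ} (hμ : ∀ k, 0 ≤ μ k)
    (hμs : Summable μ) (hν : ∀ k, 0 ≤ ν k) (hνs : Summable ν)
    (h : ∀ x, ∑' k, (Set.Iic x).indicator ν k ≤ ∑' k, (Set.Iic x).indicator μ k) :
    LowerSetStDom μ ν := by
  classical
  intro D hD
  have hμD : 0 ≤ ∑' k, D.indicator μ k :=
    tsum_nonneg fun k => Set.indicator_nonneg (fun k _ => hμ k) k
  refine tsum_le_of_sum_le' hμD fun s => ?_
  rcases (s.filter (· ∈ D)).eq_empty_or_nonempty with hs | hs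
  · refine (Finset.sum_eq_zero fun k hk => Set.indicator_of_notMem (fun hkD => ?_) _).trans_le hμD
    simpa [hs] using Finset.mem_filter.2 ⟨hk, hkD⟩
  obtain ⟨x, hx, hmax⟩ := (s.filter (· ∈ D)).exists_max_image id hs
  calc ∑ k ∈ s, D.indicator ν k ≤ ∑ k ∈ s, (Set.Iic x).indicator ν k := by
        refine Finset.sum_le_sum fun k hk => ?_
        by_cases hkD : k ∈ D
        · rw [Set.indicator_of_mem hkD, Set.indicator_of_mem
            (show k ∈ Set.Iic x from hmax k (Finset.mem_filter.2 ⟨hk, hkD⟩))]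
        · rw [Set.indicator_of_notMem hkD]
          exact Set.indicator_nonneg (fun k _ => hν k) k
    _ ≤ ∑' k, (Set.Iic x).indicator ν k :=
        Summable.sum_le_tsum s (fun k _ => Set.indicator_nonneg (fun k _ => hν k) k)
          (hνs.indicator _)
    _ ≤ ∑' k, (Set.Iic x).indicator μ k := h x
    _ ≤ ∑' k, D.indicator μ k :=
        Summable.tsum_le_tsum
          (Set.indicator_le_indicator_of_subset (hD.Iic_subset (Finset.mem_filter.1 hx).2) hμ)
          (hμs.indicator _) (hμs.indicator _)

lemma card_filter_range_natCast_lt {N : ℕ} {y : ℝ} (hyN : y ≤ N) :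
    ((Finset.range N).filter fun i : ℕ => (i : ℝ) < y).card = ⌈y⌉₊ := by
  rw [← Finset.card_range ⌈y⌉₊]
  congr 1
  ext i
  simp only [Finset.mem_filter, Finset.mem_range, Nat.lt_ceil, and_iff_right_iff_imp]
  intro hi
  exact_mod_cast hi.trans_le hyN

lemma summable_mul_of_nonneg_of_le_one {w f : α → ℝ} (hw : ∀ k, 0 ≤ w k) (hws : Summable w)
    (hf0 : ∀ k, 0 ≤ f k) (hf1 : ∀ k, f k ≤ 1) : Summable fun k => w k * f k :=
  hws.of_nonneg_of_le (fun k => mul_nonneg (hw k) (hf0 k))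
    fun k => mul_le_of_le_one_right (hw k) (hf1 k)

section Preorder

variable [Preorder α] {μ ν : α → ℝ} {f : α → ℝ}

theorem LowerSetStDom.natCast_mul_tsum_mul_le (h : LowerSetStDom μ ν) (hμ : ∀ k, 0 ≤ μ k)
    (hμs : Summable μ) (hν : ∀ k, 0 ≤ ν k) (hνs : Summable ν) (hf : Antitone f)
    (hf0 : ∀ k, 0 ≤ f k) (hf1 : ∀ k, f k ≤ 1) (N : ℕ) :
    N * ∑' k, ν k * f k ≤ N * ∑' k, μ k * f k + ∑' k, μ k := by
  let D (i : ℕ) : Set α := {k | (i : ℝ) < N * f k}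
  have hD (i : ℕ) : IsLowerSet (D i) := fun a b hba ha =>
    ha.trans_le (mul_le_mul_of_nonneg_left (hf hba) N.cast_nonneg)
  -- `N f ≤ ∑_{i < N} 𝟙_{D i} = ⌈N f⌉₊ < N f + 1`
  have hlayers (w : α → ℝ) (k : α) :
      ∑ i ∈ Finset.range N, (D i).indicator w k = ⌈N * f k⌉₊ * w k := by
    rw [Finset.sum_indicator_eq_sum_filter, Finset.sum_const, nsmul_eq_mul]
    exact congrArg (fun n : ℕ => (n : ℝ) * w k)
      (card_filter_range_natCast_lt (mul_le_of_le_one_right N.cast_nonneg (hf1 k)))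
  have hlayers_summable {w : α → ℝ} (hws : Summable w) :
      ∀ i ∈ Finset.range N, Summable ((D i).indicator w) := fun i _ => hws.indicator _
  have hμf := (summable_mul_of_nonneg_of_le_one hμ hμs hf0 hf1).mul_left (N : ℝ)
  calc (N : ℝ) * ∑' k, ν k * f k = ∑' k, N * (ν k * f k) := tsum_mul_left.symm
    _ ≤ ∑' k, ∑ i ∈ Finset.range N, (D i).indicator ν k := by
        refine Summable.tsum_le_tsum (fun k => ?_)
          ((summable_mul_of_nonneg_of_le_one hν hνs hf0 hf1).mul_left (N : ℝ))
          (summable_sum (hlayers_summable hνs))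
        rw [hlayers]
        nlinarith [Nat.le_ceil ((N : ℝ) * f k), hν k]
    _ = ∑ i ∈ Finset.range N, ∑' k, (D i).indicator ν k :=
        Summable.tsum_finsetSum (hlayers_summable hνs)
    _ ≤ ∑ i ∈ Finset.range N, ∑' k, (D i).indicator μ k :=
        Finset.sum_le_sum fun i _ => h _ (hD i)
    _ = ∑' k, ∑ i ∈ Finset.range N, (D i).indicator μ k :=
        (Summable.tsum_finsetSum (hlayers_summable hμs)).symm
    _ ≤ ∑' k, (N * (μ k * f k) + μ k) := by
        refine Summable.tsum_le_tsum (fun k => ?_) (summable_sum (hlayers_summable hμs))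
          (hμf.add hμs)
        rw [hlayers]
        nlinarith [Nat.ceil_lt_add_one (mul_nonneg N.cast_nonneg (hf0 k)), hμ k]
    _ = N * ∑' k, μ k * f k + ∑' k, μ k := by
        rw [Summable.tsum_add hμf hμs, tsum_mul_left]

theorem LowerSetStDom.tsum_mul_le (h : LowerSetStDom μ ν) (hμ : ∀ k, 0 ≤ μ k)
    (hμs : Summable μ) (hν : ∀ k, 0 ≤ ν k) (hνs : Summable ν) (hf : Antitone f)
    (hf0 : ∀ k, 0 ≤ f k) (hf1 : ∀ k, f k ≤ 1) :
    ∑' k, ν k * f k ≤ ∑' k, μ k * f k := by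
  have hlim := (tendsto_const_nhds (x := ∑' k, μ k * f k)).add
    (tendsto_const_div_atTop_nhds_zero_nat (∑' k, μ k))
  rw [add_zero] at hlim
  refine ge_of_tendsto hlim ?_
  filter_upwards [eventually_gt_atTop 0] with N hN
  rw [← sub_le_iff_le_add', le_div_iff₀ (Nat.cast_pos.2 hN)]
  linarith [h.natCast_mul_tsum_mul_le hμ hμs hν hνs hf hf0 hf1 N]

end Preorder

lemma hasSum_mul_tsum_indicator_section {f : α → ℝ} {g : β → ℝ} (hf : ∀ a, 0 ≤ f a)
    (hfs : Summable f) (hg : ∀ b, 0 ≤ g b) (hgs : Summable g) (E : Set (α × β)) :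
    HasSum (fun a => f a * ∑' b, {b | (a, b) ∈ E}.indicator g b)
      (∑' p, E.indicator (fun p => f p.1 * g p.2) p) := by
  refine ((hfs.mul_of_nonneg hgs hf hg).indicator E).hasSum.prod_fiberwise fun a => ?_
  have hrow : (fun b => E.indicator (fun p => f p.1 * g p.2) (a, b))
      = fun b => f a * {b | (a, b) ∈ E}.indicator g b := by
    funext b
    by_cases hab : (a, b) ∈ E <;> simp [hab]
  rw [hrow]
  exact (hgs.indicator _).hasSum.mul_left (f a)

theorem LowerSetStDom.prod [Preorder α] [Preorder β] {μ₁ ν₁ : α → ℝ} {μ₂ ν₂ : β → ℝ}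
    (h₁ : LowerSetStDom μ₁ ν₁) (h₂ : LowerSetStDom μ₂ ν₂)
    (hμ₁ : ∀ a, 0 ≤ μ₁ a) (hμ₁s : Summable μ₁) (hν₁ : ∀ a, 0 ≤ ν₁ a) (hν₁s : Summable ν₁)
    (hμ₂ : ∀ b, 0 ≤ μ₂ b) (hμ₂s : Summable μ₂) (hν₂ : ∀ b, 0 ≤ ν₂ b) (hν₂s : Summable ν₂) :
    LowerSetStDom (fun p : α × β => μ₁ p.1 * μ₂ p.2) (fun p => ν₁ p.1 * ν₂ p.2) := by
  intro E hE
  let E' : Set (β × α) := Prod.swap ⁻¹' E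
  have hswap (f : α → ℝ) (g : β → ℝ) :
      ∑' p, E.indicator (fun p => f p.1 * g p.2) p
        = ∑' q, E'.indicator (fun q => g q.1 * f q.2) q := by
    rw [← (Equiv.prodComm β α).tsum_eq]
    refine tsum_congr fun q => ?_
    by_cases hq : q.swap ∈ E
    · rw [Equiv.prodComm_apply, Set.indicator_of_mem hq,
        Set.indicator_of_mem (show q ∈ E' from hq), mul_comm]
      rfl
    · rw [Equiv.prodComm_apply, Set.indicator_of_notMem hq,
        Set.indicator_of_notMem (show q ∉ E' from hq)]
  have hrows (a : α) : IsLowerSet {b | (a, b) ∈ E} := fun b b' hb' hb =>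
    hE (show (a, b') ≤ (a, b) from ⟨le_rfl, hb'⟩) hb
  have hcols (b : β) : IsLowerSet {a | (b, a) ∈ E'} := fun a a' ha' ha =>
    hE (show (a', b) ≤ (a, b) from ⟨ha', le_rfl⟩) ha
  calc ∑' p, E.indicator (fun p => ν₁ p.1 * ν₂ p.2) p
      ≤ ∑' p, E.indicator (fun p => ν₁ p.1 * μ₂ p.2) p :=
        hasSum_le (fun a => mul_le_mul_of_nonneg_left (h₂ _ (hrows a)) (hν₁ a))
          (hasSum_mul_tsum_indicator_section hν₁ hν₁s hν₂ hν₂s E)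
          (hasSum_mul_tsum_indicator_section hν₁ hν₁s hμ₂ hμ₂s E)
    _ = ∑' q, E'.indicator (fun q => μ₂ q.1 * ν₁ q.2) q := hswap _ _
    _ ≤ ∑' q, E'.indicator (fun q => μ₂ q.1 * μ₁ q.2) q :=
        hasSum_le (fun b => mul_le_mul_of_nonneg_left (h₁ _ (hcols b)) (hμ₂ b))
          (hasSum_mul_tsum_indicator_section hμ₂ hμ₂s hν₁ hν₁s E')
          (hasSum_mul_tsum_indicator_section hμ₂ hμ₂s hμ₁ hμ₁s E')
    _ = ∑' p, E.indicator (fun p => μ₁ p.1 * μ₂ p.2) p := (hswap _ _).symm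

end StochasticOrder
section Convolution

variable {μ ν μ₁ ν₁ μ₂ ν₂ : ℕ∞ → ℝ}

theorem StDom.lowerSetStDom (h : StDom μ ν) (hμ : IsDist μ) (hν : IsDist ν) :
    LowerSetStDom μ ν :=
  lowerSetStDom_of_cdf_le hμ.1 hμ.2.2.summable hν.1 hν.2.2.summable fun x => by
    simpa only [Set.indicator_apply, Set.mem_Iic] using h x

lemma hasSum_indicator_conv (hs : Summable fun p : ℕ∞ × ℕ∞ => μ p.1 * ν p.2) (D : Set ℕ∞) :
    HasSum (D.indicator (conv μ ν))
      (∑' p, ((fun p : ℕ∞ × ℕ∞ => p.1 + p.2) ⁻¹' D).indicator (fun p => μ p.1 * ν p.2) p) := by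
  refine ((hs.indicator _).hasSum.tsum_fiberwise (fun p : ℕ∞ × ℕ∞ => p.1 + p.2)).congr_fun
    fun k => ?_
  rw [tsum_subtype]
  by_cases hk : k ∈ D
  · rw [Set.indicator_of_mem hk, conv]
    refine tsum_congr fun p => ?_
    by_cases hp : p.1 + p.2 = k <;> simp [hp, hk]
  · rw [Set.indicator_of_notMem hk, eq_comm]
    refine (tsum_congr fun p => ?_).trans tsum_zero
    by_cases hp : p.1 + p.2 = k <;> simp [hp, hk]

lemma IsDist.summable_mul (hμ : IsDist μ) (hν : IsDist ν) :
    Summable fun p : ℕ∞ × ℕ∞ => μ p.1 * ν p.2 :=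
  hμ.2.2.summable.mul_of_nonneg hν.2.2.summable hμ.1 hν.1

theorem IsDist.conv (hμ : IsDist μ) (hν : IsDist ν) : IsDist (conv μ ν) := by
  refine ⟨fun k => tsum_nonneg fun p => ?_, ?_, ?_⟩
  · split_ifs
    exacts [mul_nonneg (hμ.1 _) (hν.1 _), le_rfl]
  · refine (tsum_congr fun p => ?_).trans tsum_zero
    split_ifs with hp
    · rw [(add_eq_zero.1 hp).1, hμ.2.1, zero_mul]
    · rfl
  · simpa [(hμ.2.2.mul hν.2.2 (hμ.summable_mul hν)).tsum_eq] using
      hasSum_indicator_conv (hμ.summable_mul hν) Set.univ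

theorem LowerSetStDom.conv (h₁ : LowerSetStDom μ₁ ν₁) (h₂ : LowerSetStDom μ₂ ν₂)
    (hμ₁ : IsDist μ₁) (hν₁ : IsDist ν₁) (hμ₂ : IsDist μ₂) (hν₂ : IsDist ν₂) :
    LowerSetStDom (conv μ₁ μ₂) (conv ν₁ ν₂) := by
  intro D hD
  have hadd : IsLowerSet ((fun p : ℕ∞ × ℕ∞ => p.1 + p.2) ⁻¹' D) :=
    hD.preimage fun p q hpq => add_le_add hpq.1 hpq.2
  rw [(hasSum_indicator_conv (hμ₁.summable_mul hμ₂) D).tsum_eq,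
    (hasSum_indicator_conv (hν₁.summable_mul hν₂) D).tsum_eq]
  exact h₁.prod h₂ hμ₁.1 hμ₁.2.2.summable hν₁.1 hν₁.2.2.summable hμ₂.1 hμ₂.2.2.summable hν₂.1
    hν₂.2.2.summable _ hadd

end Convolution

lemma multipliable_of_nonneg_of_le_one {ι : Type*} {f : ι → ℝ} (h0 : ∀ i, 0 ≤ f i)
    (h1 : ∀ i, f i ≤ 1) : Multipliable f :=
  ⟨_, tendsto_atTop_ciInf (Finset.prod_anti_set_of_le_one h0 h1)
    ⟨0, by rintro _ ⟨s, rfl⟩; exact Finset.prod_nonneg fun i _ => h0 i⟩⟩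

lemma tprod_le_prod_of_nonneg_of_le_one {ι : Type*} {f : ι → ℝ} (h0 : ∀ i, 0 ≤ f i)
    (h1 : ∀ i, f i ≤ 1) (s : Finset ι) : ∏' i, f i ≤ ∏ i ∈ s, f i :=
  le_of_tendsto (multipliable_of_nonneg_of_le_one h0 h1).hasProd
    (eventually_atTop.2 ⟨s, fun _ hts => Finset.prod_anti_set_of_le_one h0 h1 hts⟩)

section Kingman

variable {c : ℝ}

lemma kingmanFactor_nonneg (hc : 0 ≤ c) (l : ℕ) : 0 ≤ kingmanFactor c l := by
  rw [kingmanFactor, ← Nat.cast_choose_two]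
  positivity

lemma kingmanFactor_le_one (hc : 0 ≤ c) (l : ℕ) : kingmanFactor c l ≤ 1 := by
  rw [kingmanFactor, ← Nat.cast_choose_two]
  exact div_le_one_of_le₀ (le_add_of_nonneg_right hc) (by positivity)

lemma kingmanFactor_one : kingmanFactor c 1 = 0 := by
  simp [kingmanFactor]

lemma div_add_kingmanFactor (hc : 0 < c) (l : ℕ) :
    c / ((l : ℝ) * ((l : ℝ) - 1) / 2 + c) + kingmanFactor c l = 1 := by
  rw [kingmanFactor, ← Nat.cast_choose_two, ← add_div, add_comm c, div_self]
  positivity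

lemma pK_natCast (J k : ℕ) :
    pK c J k = c / ((k : ℝ) * ((k : ℝ) - 1) / 2 + c) *
      ∏ l ∈ Finset.Icc (k + 1) J, kingmanFactor c l := by
  rw [pK, if_neg (ENat.natCast_ne_top J), ENat.toNat_natCast]

lemma pK_nonneg (hc : 0 ≤ c) (j : ℕ∞) (i : ℕ) : 0 ≤ pK c j i := by
  rw [pK, ← Nat.cast_choose_two]
  refine mul_nonneg (by positivity) ?_
  split_ifs
  · exact tprod_nonneg fun l => kingmanFactor_nonneg hc _
  · exact Finset.prod_nonneg fun l _ => kingmanFactor_nonneg hc l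

lemma pK_le_one (hc : 0 ≤ c) (j : ℕ∞) (i : ℕ) : pK c j i ≤ 1 := by
  rw [pK, ← Nat.cast_choose_two]
  refine mul_le_one₀ (div_le_one_of_le₀ (le_add_of_nonneg_left (by positivity))
    (by positivity)) ?_ ?_
  all_goals split_ifs
  · exact tprod_nonneg fun l => kingmanFactor_nonneg hc _
  · exact Finset.prod_nonneg fun l _ => kingmanFactor_nonneg hc l
  · simpa using tprod_le_prod_of_nonneg_of_le_one (fun l => kingmanFactor_nonneg hc _)
      (fun l => kingmanFactor_le_one hc _) ∅
  · exact Finset.prod_le_one (fun l _ => kingmanFactor_nonneg hc l)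
      fun l _ => kingmanFactor_le_one hc l

lemma pK_top_le (hc : 0 ≤ c) (k J : ℕ) : pK c ⊤ k ≤ pK c J k := by
  rw [pK_natCast, pK, if_pos rfl, ← Nat.cast_choose_two]
  refine mul_le_mul_of_nonneg_left ?_ (by positivity)
  calc ∏' l, kingmanFactor c (k + 1 + l)
      ≤ ∏ l ∈ Finset.range (J + 1 - (k + 1)), kingmanFactor c (k + 1 + l) :=
        tprod_le_prod_of_nonneg_of_le_one (fun l => kingmanFactor_nonneg hc _)
          (fun l => kingmanFactor_le_one hc _) _
    _ = ∏ l ∈ Finset.Icc (k + 1) J, kingmanFactor c l := by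
        rw [← Finset.prod_Ico_eq_prod_range, Finset.Ico_add_one_right_eq_Icc]

lemma pK_natCast_succ {k J : ℕ} (hkJ : k ≤ J) :
    pK c (J + 1 : ℕ) k = pK c J k * kingmanFactor c (J + 1) := by
  rw [pK_natCast, pK_natCast, Finset.prod_Icc_succ_top (by omega), mul_assoc]

lemma sum_range_pK (hc : 0 < c) (J : ℕ) : ∑ k ∈ Finset.range (J + 1), pK c J k = 1 := by
  induction J with
  | zero =>
    rw [Finset.sum_range_one, pK_natCast]
    simp [hc.ne']
  | succ J ih =>
    rw [Finset.sum_range_succ, Finset.sum_congr rfl fun k hk =>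
      pK_natCast_succ (Nat.lt_succ_iff.1 (Finset.mem_range.1 hk)), ← Finset.sum_mul, ih,
      one_mul, pK_natCast, Finset.Icc_eq_empty (by omega), Finset.prod_empty, mul_one,
      add_comm]
    exact_mod_cast div_add_kingmanFactor hc (J + 1)

lemma pK_zero {j : ℕ∞} (hj : j ≠ 0) : pK c j 0 = 0 := by
  induction j using ENat.recTopCoe with
  | top => rw [pK, if_pos rfl, tprod_of_exists_eq_zero ⟨0, kingmanFactor_one⟩, mul_zero]
  | coe J =>
    rw [pK_natCast, Finset.prod_eq_zero (i := 1) (Finset.mem_Icc.2 ⟨le_rfl, ?_⟩)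
      kingmanFactor_one, mul_zero]
    exact Nat.one_le_iff_ne_zero.2 (by exact_mod_cast hj)

-- The term `k = 0` matters only at `j = 0`, where `pK c 0 0 = 1`; it makes `kingmanCdf c m`
-- antitone on all of `ℕ∞`.
noncomputable def kingmanCdf (c : ℝ) (m : ℕ) (j : ℕ∞) : ℝ :=
  ∑ k ∈ Finset.range (m + 1), if (k : ℕ∞) ≤ j then pK c j k else 0

lemma kingmanCdf_natCast (m J : ℕ) :
    kingmanCdf c m J = ∑ k ∈ Finset.range (min m J + 1), pK c J k := by
  rw [kingmanCdf, ← Finset.sum_filter]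
  congr 1
  ext k
  simp only [Finset.mem_filter, Finset.mem_range, Nat.cast_le]
  omega

lemma kingmanCdf_top (m : ℕ) : kingmanCdf c m ⊤ = ∑ k ∈ Finset.range (m + 1), pK c ⊤ k :=
  Finset.sum_congr rfl fun _ _ => if_pos le_top

lemma kingmanCdf_nonneg (hc : 0 ≤ c) (m : ℕ) (j : ℕ∞) : 0 ≤ kingmanCdf c m j :=
  Finset.sum_nonneg fun k _ => by
    split_ifs
    exacts [pK_nonneg hc _ _, le_rfl]

lemma kingmanCdf_natCast_of_le (hc : 0 < c) {m J : ℕ} (hJm : J ≤ m) : kingmanCdf c m J = 1 := by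
  rw [kingmanCdf_natCast, min_eq_right hJm, sum_range_pK hc]

lemma kingmanCdf_natCast_succ_le (hc : 0 < c) (m J : ℕ) :
    kingmanCdf c m (J + 1 : ℕ) ≤ kingmanCdf c m J := by
  rcases le_or_gt m J with hmJ | hJm
  · rw [kingmanCdf_natCast, kingmanCdf_natCast, min_eq_left hmJ, min_eq_left (by omega)]
    refine Finset.sum_le_sum fun k hk => ?_
    rw [pK_natCast_succ (by simp at hk; omega)]
    exact mul_le_of_le_one_right (pK_nonneg hc.le _ _) (kingmanFactor_le_one hc.le _)
  · rw [kingmanCdf_natCast_of_le hc hJm.le, kingmanCdf_natCast_of_le hc hJm]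

lemma kingmanCdf_antitone (hc : 0 < c) (m : ℕ) : Antitone (kingmanCdf c m) := by
  have hnat : Antitone fun J : ℕ => kingmanCdf c m J :=
    antitone_nat_of_succ_le (kingmanCdf_natCast_succ_le hc m)
  have htop (J : ℕ) : kingmanCdf c m ⊤ ≤ kingmanCdf c m J := by
    refine le_trans ?_ (hnat (le_max_right m J))
    dsimp only
    rw [kingmanCdf_top, kingmanCdf_natCast, min_eq_left (le_max_left m J)]
    exact Finset.sum_le_sum fun k _ => pK_top_le hc.le k _
  intro a b hab
  induction b using ENat.recTopCoe with
  | top =>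
    induction a using ENat.recTopCoe with
    | top => exact le_rfl
    | coe I => exact htop I
  | coe J =>
    lift a to ℕ using ne_top_of_le_ne_top (ENat.natCast_ne_top J) hab
    exact hnat (by exact_mod_cast hab)

lemma kingmanCdf_le_one (hc : 0 < c) (m : ℕ) (j : ℕ∞) : kingmanCdf c m j ≤ 1 :=
  (kingmanCdf_antitone hc m (by simp : ((0 : ℕ) : ℕ∞) ≤ j)).trans_eq
    (kingmanCdf_natCast_of_le hc m.zero_le)

end Kingman

lemma ENat.hasSum_add_top {f : ℕ∞ → ℝ} {a : ℝ} (hf : HasSum (fun n : ℕ => f n) a) :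
    HasSum f (a + f ⊤) := by
  have hcompl : IsCompl (Set.range ((↑) : ℕ → ℕ∞)) {⊤} := by
    rw [ENat.range_natCast, Set.Iio_top]
    exact isCompl_compl.symm
  exact ((Nat.cast_injective.hasSum_range_iff).2 hf).add_isCompl hcompl (hasSum_singleton ⊤ f)

section Fc

variable {c : ℝ} {μ : ℕ∞ → ℝ}

lemma FcFin_summand_nonneg (hc : 0 ≤ c) (hμ : IsDist μ) (n : ℕ) (j : ℕ∞) :
    0 ≤ if (n : ℕ∞) ≤ j then conv μ μ j * pK c j n else 0 := by
  split_ifs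
  exacts [mul_nonneg ((hμ.conv hμ).1 j) (pK_nonneg hc j n), le_rfl]

lemma FcFin_zero (hμ : IsDist μ) : FcFin c μ 0 = 0 := by
  refine (tsum_congr fun j => ?_).trans tsum_zero
  rcases eq_or_ne j 0 with rfl | hj
  · rw [(hμ.conv hμ).2.1, zero_mul, ite_self]
  · rw [pK_zero hj, mul_zero, ite_self]

lemma Fc_natCast (hμ : IsDist μ) (n : ℕ) : Fc c μ n = FcFin c μ n := by
  rcases eq_or_ne n 0 with rfl | hn
  · simp [Fc, FcFin_zero hμ]
  · simp [Fc, hn]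

lemma sum_range_FcFin (hc : 0 ≤ c) (hμ : IsDist μ) (m : ℕ) :
    ∑ n ∈ Finset.range (m + 1), FcFin c μ n = ∑' j, conv μ μ j * kingmanCdf c m j := by
  unfold FcFin
  rw [← Summable.tsum_finsetSum fun n _ => ?_]
  · refine tsum_congr fun j => ?_
    rw [kingmanCdf, Finset.mul_sum]
    exact Finset.sum_congr rfl fun n _ => by rw [mul_ite, mul_zero]
  · refine (hμ.conv hμ).2.2.summable.of_nonneg_of_le (FcFin_summand_nonneg hc hμ n) fun j => ?_
    split_ifs
    exacts [mul_le_of_le_one_right ((hμ.conv hμ).1 j) (pK_le_one hc j n), (hμ.conv hμ).1 j]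

lemma tsum_ite_le_natCast_Fc (hc : 0 ≤ c) (hμ : IsDist μ) (m : ℕ) :
    ∑' k, (if k ≤ (m : ℕ∞) then Fc c μ k else 0) = ∑' j, conv μ μ j * kingmanCdf c m j := by
  rw [← sum_range_FcFin hc hμ m,
    tsum_eq_sum (s := (Finset.range (m + 1)).map Nat.castEmbedding) fun k hk => ?_,
    Finset.sum_map]
  · refine Finset.sum_congr rfl fun n hn => ?_
    rw [Nat.castEmbedding_apply, if_pos (by simpa [Nat.lt_succ_iff] using hn), Fc_natCast hμ]
  · refine if_neg fun hkm => hk ?_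
    lift k to ℕ using ne_top_of_le_ne_top (ENat.natCast_ne_top m) hkm
    simpa [Nat.lt_succ_iff] using hkm

lemma hasSum_Fc (hc : 0 < c) (hμ : IsDist μ) : HasSum (Fc c μ) 1 := by
  have hsum : Summable fun n : ℕ => FcFin c μ n := by
    refine summable_of_sum_range_le (c := 1)
      (fun n => tsum_nonneg (FcFin_summand_nonneg hc.le hμ n)) fun n => ?_
    rcases n with _ | m
    · simp
    obtain ⟨h0, -, h1⟩ := hμ.conv hμ
    have hle (j : ℕ∞) : conv μ μ j * kingmanCdf c m j ≤ conv μ μ j :=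
      mul_le_of_le_one_right (h0 j) (kingmanCdf_le_one hc m j)
    rw [sum_range_FcFin hc.le hμ m, ← h1.tsum_eq]
    exact Summable.tsum_le_tsum hle (h1.summable.of_nonneg_of_le
      (fun j => mul_nonneg (h0 j) (kingmanCdf_nonneg hc.le m j)) hle) h1.summable
  have := ENat.hasSum_add_top (hsum.hasSum.congr_fun fun n => Fc_natCast hμ n)
  rwa [Fc, if_pos rfl, add_sub_cancel] at this

end Fc

/-- For every `c > 0`, the map `F_c` is monotone with respect to the
stochastic order: if `μ ⪯ ν` then `F_c(μ) ⪯ F_c(ν)`. -/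
theorem Fc_monotone (c : ℝ) (hc : 0 < c) (μ ν : ℕ∞ → ℝ) (hμ : IsDist μ) (hν : IsDist ν)
    (h : StDom μ ν) : StDom (Fc c μ) (Fc c ν) := by
  have hconv := (h.lowerSetStDom hμ hν).conv (h.lowerSetStDom hμ hν) hμ hν hμ hν
  intro x
  induction x using ENat.recTopCoe with
  | top =>
    simp only [le_top, if_true, (hasSum_Fc hc hμ).tsum_eq, (hasSum_Fc hc hν).tsum_eq, le_rfl]
  | coe m =>
    rw [tsum_ite_le_natCast_Fc hc.le hμ, tsum_ite_le_natCast_Fc hc.le hν]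
    exact hconv.tsum_mul_le (hμ.conv hμ).1 (hμ.conv hμ).2.2.summable (hν.conv hν).1
      (hν.conv hν).2.2.summable (kingmanCdf_antitone hc m) (kingmanCdf_nonneg hc.le m)
      (kingmanCdf_le_one hc m)
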